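/- If η₁ precedes η₂ (η₁ ≺ η₂), then U is a grounded repair for (DB, η₁ ∪ η₂) if and only if U = U₁ ∪ U₂, U₁ is a grounded repair for (DB, η₁), and U₂ is a grounded repair for (U₁(DB), η₂). -/
import Mathlib


/-- Update actions: add or remove an atom. -/
inductive Act (A : Type) : Type
  | add : A → Act A
  | rem : A → Act A

/-- The dual of an update action. -/
def Act.dual {A : Type} : Act A → Act A
  | .add a => .rem a
  | .rem a => .add a

/-- Literals: an atom or its negation. -/
inductive Lit (A : Type) : Type
  | pos : A → Lit A
  | neg : A → Lit A

/-- The "dual" (negation) of a literal. -/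
def Lit.negate {A : Type} : Lit A → Lit A
  | .pos a => .neg a
  | .neg a => .pos a

/-- The literal associated to an update action. -/
def litOf {A : Type} : Act A → Lit A
  | .add a => .pos a
  | .rem a => .neg a

/-- The update action associated to a literal. -/
def uaOf {A : Type} : Lit A → Act A
  | .pos a => .add a
  | .neg a => .rem a

/-- Satisfaction of a literal by a database. -/
def satLit {A : Type} (DB : Set A) : Lit A → Prop
  | .pos a => a ∈ DB
  | .neg a => a ∉ DB

/-- The result `U(DB)` of applying a set of update actions to a database. -/
def applyUA {A : Type} (U : Set (Act A)) (DB : Set A) : Set A :=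
  (DB ∪ {a | Act.add a ∈ U}) \ {a | Act.rem a ∈ U}

/-- A set of update actions is consistent if it has no action together with its dual. -/
def consistentUA {A : Type} (U : Set (Act A)) : Prop :=
  ∀ α ∈ U, α.dual ∉ U

/-- An action changes the database. -/
def changes {A : Type} (DB : Set A) : Act A → Prop
  | .add a => a ∉ DB
  | .rem a => a ∈ DB

/-- The operation `U ⊎ V = (U ∪ {α ∈ V | αᴰ ∉ U}) \ {α ∈ U | αᴰ ∈ V}`. -/
def uplus {A : Type} (U V : Set (Act A)) : Set (Act A) :=
  (U ∪ {α | α ∈ V ∧ α.dual ∉ U}) \ {α | α ∈ U ∧ α.dual ∈ V}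

/-- A normalized active integrity constraint. -/
structure NAIC (A : Type) where
  body : Set (Lit A)
  head : Act A
  hcond : litOf head.dual ∈ body

/-- Satisfaction of a body (set of literals) by a database. -/
def satBody {A : Type} (DB : Set A) (B : Set (Lit A)) : Prop :=
  ∀ ℓ ∈ B, satLit DB ℓ

/-- The operator `T(U) = U ⊎ {head(r) | U(DB) ⊨ body(r), r ∈ η}`. -/
def T {A : Type} (DB : Set A) (η : Set (NAIC A)) (U : Set (Act A)) : Set (Act A) :=
  uplus U {α | ∃ r ∈ η, r.head = α ∧ satBody (applyUA U DB) r.body}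

/-- `U` is a weak repair for `(DB, η)`. -/
def weakRepair {A : Type} (DB : Set A) (η : Set (NAIC A)) (U : Set (Act A)) : Prop :=
  (∀ α ∈ U, changes DB α) ∧ ∀ r ∈ η, ¬ satBody (applyUA U DB) r.body

/-- `U` is a repair for `(DB, η)`: a weak repair minimal wrt inclusion. -/
def repair {A : Type} (DB : Set A) (η : Set (NAIC A)) (U : Set (Act A)) : Prop :=
  weakRepair DB η U ∧ ∀ V ⊆ U, weakRepair DB η V → V = U

/-- `U` is founded wrt `(DB, η)`. -/
def founded {A : Type} (DB : Set A) (η : Set (NAIC A)) (U : Set (Act A)) : Prop :=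
  ∀ α ∈ U, ∃ r ∈ η, r.head = α ∧ satBody (applyUA (U \ {α}) DB) r.body

/-- `U` is a (strictly) grounded fixpoint-candidate of `T`: no `V ⊊ U` with `T(V) ∩ U ⊆ V`. -/
def strictlyGroundedT {A : Type} (DB : Set A) (η : Set (NAIC A)) (U : Set (Act A)) : Prop :=
  ¬ ∃ V : Set (Act A), V ⊂ U ∧ T DB η V ∩ U ⊆ V

/-- A grounded repair: a repair that is a (strictly) grounded fixpoint of `T`. -/
def groundedRepair {A : Type} (DB : Set A) (η : Set (NAIC A)) (U : Set (Act A)) : Prop :=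
  repair DB η U ∧ strictlyGroundedT DB η U

/-- A well-founded weak repair: a weak repair whose elements can be ordered
`α₁, …, αₙ` so that each `αᵢ` is the head of a rule applicable in `{α₁,…,α_{i-1}}(DB)`. -/
def wellFoundedWeakRepair {A : Type} (DB : Set A) (η : Set (NAIC A)) (U : Set (Act A)) : Prop :=
  weakRepair DB η U ∧ ∃ l : List (Act A), l.Nodup ∧ (∀ α, α ∈ U ↔ α ∈ l) ∧
    ∀ i : Fin l.length, ∃ r ∈ η, r.head = l.get i ∧
      satBody (applyUA {β | β ∈ l.take i.val} DB) r.body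

/-- `ℓ` shares no common or dual literal with the set `B`. -/
def noCommonOrDual {A : Type} (ℓ : Lit A) (B : Set (Lit A)) : Prop :=
  ℓ ∉ B ∧ ℓ.negate ∉ B

/-- `η₁ ⊥ η₂`: for all `r₁ ∈ η₁`, `r₂ ∈ η₂`, `lit(head(rᵢ))` and `body(r₍₃₋ᵢ₎)` contain
no common or dual literals. -/
def indepAIC {A : Type} (η₁ η₂ : Set (NAIC A)) : Prop :=
  ∀ r₁ ∈ η₁, ∀ r₂ ∈ η₂,
    noCommonOrDual (litOf r₁.head) r₂.body ∧ noCommonOrDual (litOf r₂.head) r₁.body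

/-- `η₁ ≺ η₂`: for all `r₁ ∈ η₁`, `r₂ ∈ η₂`, `lit(head(r₂))` and `body(r₁)` contain no
common or dual literals, but not conversely. -/
def precedesAIC {A : Type} (η₁ η₂ : Set (NAIC A)) : Prop :=
  (∀ r₁ ∈ η₁, ∀ r₂ ∈ η₂, noCommonOrDual (litOf r₂.head) r₁.body) ∧
  ¬ (∀ r₁ ∈ η₁, ∀ r₂ ∈ η₂, noCommonOrDual (litOf r₁.head) r₂.body)

/-- The atom of an action. -/
def atomA {A : Type} : Act A → A
  | .add a => a
  | .rem a => a

/-- The atom of a literal. -/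
def atomL {A : Type} : Lit A → A
  | .pos a => a
  | .neg a => a

lemma atomA_dual {A : Type} (α : Act A) : atomA α.dual = atomA α := by
  cases α <;> rfl

lemma mem_applyUA {A : Type} {U : Set (Act A)} {DB : Set A} {a : A} :
    a ∈ applyUA U DB ↔ (a ∈ DB ∨ Act.add a ∈ U) ∧ Act.rem a ∉ U := by
  simp [applyUA]

lemma satLit_congr {A : Type} {D1 D2 : Set A} {ℓ : Lit A}
    (h : atomL ℓ ∈ D1 ↔ atomL ℓ ∈ D2) : satLit D1 ℓ ↔ satLit D2 ℓ := by
  cases ℓ with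
  | pos a => simpa [satLit, atomL] using h
  | neg a => simp only [satLit]; exact not_congr (by simpa [atomL] using h)

lemma mem_applyUA_union {A : Type} {W1 W2 : Set (Act A)} {DB : Set A} {a : A}
    (h : ∀ α ∈ W2, atomA α ≠ a) :
    a ∈ applyUA (W1 ∪ W2) DB ↔ a ∈ applyUA W1 DB := by
  have h1 : Act.add a ∉ W2 := fun hc => h _ hc rfl
  have h2 : Act.rem a ∉ W2 := fun hc => h _ hc rfl
  simp only [mem_applyUA, Set.mem_union]
  tauto

lemma satBody_applyUA_union {A : Type} {W1 W2 : Set (Act A)} {DB : Set A} {B : Set (Lit A)}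
    (h : ∀ α ∈ W2, ∀ ℓ ∈ B, atomA α ≠ atomL ℓ) :
    satBody (applyUA (W1 ∪ W2) DB) B ↔ satBody (applyUA W1 DB) B := by
  unfold satBody
  exact forall₂_congr fun ℓ hl =>
    satLit_congr (mem_applyUA_union fun α hα => h α hα ℓ hl)

lemma applyUA_union_comp {A : Type} {W1 W2 : Set (Act A)} {DB : Set A}
    (h : ∀ α ∈ W1, ∀ β ∈ W2, atomA α ≠ atomA β) :
    applyUA (W1 ∪ W2) DB = applyUA W2 (applyUA W1 DB) := by
  ext a
  have k1 : Act.add a ∈ W2 → Act.add a ∉ W1 ∧ Act.rem a ∉ W1 :=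
    fun h2 => ⟨fun h1 => h _ h1 _ h2 rfl, fun h1 => h _ h1 _ h2 rfl⟩
  have k2 : Act.rem a ∈ W2 → Act.add a ∉ W1 ∧ Act.rem a ∉ W1 :=
    fun h2 => ⟨fun h1 => h _ h1 _ h2 rfl, fun h1 => h _ h1 _ h2 rfl⟩
  simp only [mem_applyUA, Set.mem_union]
  tauto

lemma mem_applyUA_of_untouched {A : Type} {W : Set (Act A)} {DB : Set A} {a : A}
    (h : ∀ β ∈ W, atomA β ≠ a) : a ∈ applyUA W DB ↔ a ∈ DB := by
  have h1 : Act.add a ∉ W := fun hc => h _ hc rfl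
  have h2 : Act.rem a ∉ W := fun hc => h _ hc rfl
  simp [mem_applyUA, h1, h2]

lemma changes_applyUA {A : Type} {W : Set (Act A)} {DB : Set A} {α : Act A}
    (h : ∀ β ∈ W, atomA β ≠ atomA α) : changes (applyUA W DB) α ↔ changes DB α := by
  cases α with
  | add a => simp only [changes]; exact not_congr (mem_applyUA_of_untouched h)
  | rem a => simp only [changes]; exact mem_applyUA_of_untouched h

lemma mem_uplus {A : Type} {U V : Set (Act A)} {α : Act A} :
    α ∈ uplus U V ↔ (α ∈ U ∨ (α ∈ V ∧ α.dual ∉ U)) ∧ ¬(α ∈ U ∧ α.dual ∈ V) := by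
  simp only [uplus, Set.mem_diff, Set.mem_union, Set.mem_setOf_eq]

lemma atom_ne_of_ncd {A : Type} {β : Act A} {B : Set (Lit A)}
    (h : noCommonOrDual (litOf β) B) {ℓ : Lit A} (hl : ℓ ∈ B) : atomA β ≠ atomL ℓ := by
  obtain ⟨h1, h2⟩ := h
  intro he
  cases β <;> cases ℓ <;> simp [atomA, atomL] at he <;> subst he <;>
    simp [litOf, Lit.negate] at h1 h2 <;> tauto

lemma head_atom_ne {A : Type} (r₁ r₂ : NAIC A)
    (hp : noCommonOrDual (litOf r₂.head) r₁.body) : atomA r₂.head ≠ atomA r₁.head := by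
  obtain ⟨h1, h2⟩ := hp
  have hb := r₁.hcond
  intro he
  rcases hh2 : r₂.head with a | a <;> rcases hh1 : r₁.head with b | b <;>
    rw [hh2] at h1 h2 he <;> rw [hh1] at hb he <;>
    simp [atomA] at he <;> subst he <;>
    simp [litOf, Act.dual, Lit.negate] at h1 h2 hb <;> tauto

lemma T_eq_of_weakRepair {A : Type} {DB : Set A} {η : Set (NAIC A)} {V : Set (Act A)}
    (h : weakRepair DB η V) : T DB η V = V := by
  have hS : {α | ∃ r ∈ η, r.head = α ∧ satBody (applyUA V DB) r.body} = (∅ : Set (Act A)) := by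
    ext α
    simp only [Set.mem_setOf_eq, Set.mem_empty_iff_false, iff_false]
    rintro ⟨r, hr, -, hs⟩
    exact h.2 r hr hs
  rw [T, hS]
  ext α
  simp [uplus]

lemma repair_of_grounded {A : Type} {DB : Set A} {η : Set (NAIC A)} {U : Set (Act A)}
    (hw : weakRepair DB η U) (hg : strictlyGroundedT DB η U) : groundedRepair DB η U := by
  refine ⟨⟨hw, fun V hVU hwV => ?_⟩, hg⟩
  by_contra hne
  exact hg ⟨V, Set.ssubset_iff_subset_ne.mpr ⟨hVU, hne⟩,
    by rw [T_eq_of_weakRepair hwV]; exact Set.inter_subset_left⟩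


/-- If `η₁ ≺ η₂`, then `U` is a grounded repair for `(DB, η₁ ∪ η₂)` iff `U = U₁ ∪ U₂`,
`U₁` is a grounded repair for `(DB, η₁)` and `U₂` is a grounded repair for
`(U₁(DB), η₂)`, where `Uᵢ = U ∩ {head(r) | r ∈ ηᵢ}`. -/
theorem precedes_groundedRepair {A : Type} (DB : Set A) (η₁ η₂ : Set (NAIC A))
    (hdisj : Disjoint η₁ η₂) (h : precedesAIC η₁ η₂) (U : Set (Act A)) :
    groundedRepair DB (η₁ ∪ η₂) U ↔
      (U = (U ∩ {α | ∃ r ∈ η₁, r.head = α}) ∪ (U ∩ {α | ∃ r ∈ η₂, r.head = α}) ∧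
        groundedRepair DB η₁ (U ∩ {α | ∃ r ∈ η₁, r.head = α}) ∧
        groundedRepair (applyUA (U ∩ {α | ∃ r ∈ η₁, r.head = α}) DB) η₂
          (U ∩ {α | ∃ r ∈ η₂, r.head = α})) := by
  classical
  obtain ⟨hp, -⟩ := h
  set H1 : Set (Act A) := {α | ∃ r ∈ η₁, r.head = α} with hH1def
  set H2 : Set (Act A) := {α | ∃ r ∈ η₂, r.head = α} with hH2def
  have factHead : ∀ α ∈ H2, ∀ β ∈ H1, atomA α ≠ atomA β := by
    rintro α ⟨r₂, hr₂, rfl⟩ β ⟨r₁, hr₁, rfl⟩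
    exact head_atom_ne r₁ r₂ (hp r₁ hr₁ r₂ hr₂)
  have factBody : ∀ α ∈ H2, ∀ r₁ ∈ η₁, ∀ ℓ ∈ r₁.body, atomA α ≠ atomL ℓ := by
    rintro α ⟨r₂, hr₂, rfl⟩ r₁ hr₁ ℓ hl
    exact atom_ne_of_ncd (hp r₁ hr₁ r₂ hr₂) hl
  have hH12 : ∀ α, α ∈ H1 → α ∈ H2 → False := fun α h1 h2 => factHead α h2 α h1 rfl
  have congr1 : ∀ (W1 W2 : Set (Act A)), W2 ⊆ H2 → ∀ r₁ ∈ η₁,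
      (satBody (applyUA (W1 ∪ W2) DB) r₁.body ↔ satBody (applyUA W1 DB) r₁.body) :=
    fun W1 W2 hW2 r₁ hr₁ =>
      satBody_applyUA_union fun α hα ℓ hl => factBody α (hW2 hα) r₁ hr₁ ℓ hl
  have comp12 : ∀ (W1 W2 : Set (Act A)), W1 ⊆ H1 → W2 ⊆ H2 →
      applyUA (W1 ∪ W2) DB = applyUA W2 (applyUA W1 DB) :=
    fun W1 W2 h1 h2 =>
      applyUA_union_comp fun α hα β hβ => (factHead β (h2 hβ) α (h1 hα)).symm
  set U1 : Set (Act A) := U ∩ H1 with hU1def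
  set U2 : Set (Act A) := U ∩ H2 with hU2def
  have hU1H : U1 ⊆ H1 := Set.inter_subset_right
  have hU2H : U2 ⊆ H2 := Set.inter_subset_right
  constructor
  · rintro ⟨⟨hw, hmin⟩, hg⟩
    have hUH : U ⊆ H1 ∪ H2 := by
      intro α hα
      by_contra hc
      refine hg ⟨U \ {α}, ?_, ?_⟩
      · rw [Set.ssubset_def]
        exact ⟨Set.diff_subset, fun hsup => (hsup hα).2 rfl⟩
      · rintro β ⟨hβT, hβU⟩
        rcases (mem_uplus.mp hβT).1 with hβV | ⟨hβS, -⟩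
        · exact hβV
        · obtain ⟨r, hr, rfl, -⟩ := hβS
          have hmem : r.head ∈ H1 ∪ H2 := by
            rcases hr with hr | hr
            exacts [Or.inl ⟨r, hr, rfl⟩, Or.inr ⟨r, hr, rfl⟩]
          refine ⟨hβU, ?_⟩
          simp only [Set.mem_singleton_iff]
          rintro rfl
          exact hc hmem
    have hUeq : U = U1 ∪ U2 := by
      ext α
      constructor
      · intro hα
        rcases hUH hα with hh | hh
        exacts [Or.inl ⟨hα, hh⟩, Or.inr ⟨hα, hh⟩]
      · rintro (⟨hh, -⟩ | ⟨hh, -⟩) <;> exact hh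
    have hwr1 : weakRepair DB η₁ U1 := by
      refine ⟨fun α hα => hw.1 α hα.1, fun r₁ hr₁ hs => ?_⟩
      have hiff := congr1 U1 U2 hU2H r₁ hr₁
      rw [← hUeq] at hiff
      exact hw.2 r₁ (Or.inl hr₁) (hiff.mpr hs)
    have hg1 : strictlyGroundedT DB η₁ U1 := by
      rintro ⟨V1, hV1sub, hV1T⟩
      refine hg ⟨V1 ∪ U2, ?_, ?_⟩
      · rw [Set.ssubset_def]
        constructor
        · rw [hUeq]
          exact Set.union_subset_union_left U2 (subset_of_ssubset hV1sub)
        · intro hsup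
          obtain ⟨α, hαU1, hαV1⟩ := Set.exists_of_ssubset hV1sub
          rcases hsup hαU1.1 with hh | hh
          · exact hαV1 hh
          · exact hH12 α hαU1.2 hh.2
      · rintro α ⟨hαT, hαU⟩
        by_cases hmem : α ∈ V1 ∪ U2
        · exact hmem
        obtain ⟨hor, -⟩ := mem_uplus.mp hαT
        rcases hor with hV | ⟨hS, hdual⟩
        · exact hV
        obtain ⟨r, hr, rfl, hsat⟩ := hS
        rcases hr with hr1 | hr2
        · have hsat1 : satBody (applyUA V1 DB) r.body :=
            (congr1 V1 U2 hU2H r hr1).mp hsat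
          have hT1 : r.head ∈ T DB η₁ V1 := by
            rw [T]
            exact mem_uplus.mpr ⟨Or.inr ⟨⟨r, hr1, rfl, hsat1⟩, fun hd => hdual (Or.inl hd)⟩,
              fun hin => hmem (Or.inl hin.1)⟩
          exact Or.inl (hV1T ⟨hT1, hαU, ⟨r, hr1, rfl⟩⟩)
        · exact Or.inr ⟨hαU, ⟨r, hr2, rfl⟩⟩
    have hwr2 : weakRepair (applyUA U1 DB) η₂ U2 := by
      constructor
      · intro α hα
        have hne : ∀ β ∈ U1, atomA β ≠ atomA α :=
          fun β hβ => (factHead α hα.2 β hβ.2).symm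
        exact (changes_applyUA hne).mpr (hw.1 α hα.1)
      · intro r₂ hr₂ hs
        rw [← comp12 U1 U2 hU1H hU2H, ← hUeq] at hs
        exact hw.2 r₂ (Or.inr hr₂) hs
    have hg2 : strictlyGroundedT (applyUA U1 DB) η₂ U2 := by
      rintro ⟨V2, hV2sub, hV2T⟩
      have hV2H : V2 ⊆ H2 := fun β hβ => ((subset_of_ssubset hV2sub) hβ).2
      refine hg ⟨U1 ∪ V2, ?_, ?_⟩
      · rw [Set.ssubset_def]
        constructor
        · rw [hUeq]
          exact Set.union_subset_union_right U1 (subset_of_ssubset hV2sub)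
        · intro hsup
          obtain ⟨α, hαU2, hαV2⟩ := Set.exists_of_ssubset hV2sub
          rcases hsup hαU2.1 with hh | hh
          · exact hH12 α hh.2 hαU2.2
          · exact hαV2 hh
      · rintro α ⟨hαT, hαU⟩
        by_cases hmem : α ∈ U1 ∪ V2
        · exact hmem
        obtain ⟨hor, -⟩ := mem_uplus.mp hαT
        rcases hor with hV | ⟨hS, hdual⟩
        · exact hV
        obtain ⟨r, hr, rfl, hsat⟩ := hS
        rcases hr with hr1 | hr2
        · exact absurd ((congr1 U1 V2 hV2H r hr1).mp hsat) (hwr1.2 r hr1)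
        · rw [comp12 U1 V2 hU1H hV2H] at hsat
          have hT2 : r.head ∈ T (applyUA U1 DB) η₂ V2 := by
            rw [T]
            exact mem_uplus.mpr ⟨Or.inr ⟨⟨r, hr2, rfl, hsat⟩, fun hd => hdual (Or.inr hd)⟩,
              fun hin => hmem (Or.inr hin.1)⟩
          exact Or.inr (hV2T ⟨hT2, hαU, ⟨r, hr2, rfl⟩⟩)
    exact ⟨hUeq, repair_of_grounded hwr1 hg1, repair_of_grounded hwr2 hg2⟩
  · rintro ⟨hUeq, hgr1, hgr2⟩
    obtain ⟨⟨hw1, -⟩, hg1⟩ := hgr1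
    obtain ⟨⟨hw2, -⟩, hg2⟩ := hgr2
    have hwU : weakRepair DB (η₁ ∪ η₂) U := by
      constructor
      · intro α hα
        rw [hUeq] at hα
        rcases hα with hα | hα
        · exact hw1.1 α hα
        · have hne : ∀ β ∈ U1, atomA β ≠ atomA α :=
            fun β hβ => (factHead α hα.2 β hβ.2).symm
          exact (changes_applyUA hne).mp (hw2.1 α hα)
      · rintro r (hr | hr) hs
        · rw [hUeq] at hs
          exact hw1.2 r hr ((congr1 U1 U2 hU2H r hr).mp hs)
        · rw [hUeq, comp12 U1 U2 hU1H hU2H] at hs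
          exact hw2.2 r hr hs
    have hgU : strictlyGroundedT DB (η₁ ∪ η₂) U := by
      rintro ⟨V, hVsub, hVT⟩
      set V1 : Set (Act A) := V ∩ U1 with hV1def
      set V2 : Set (Act A) := V ∩ U2 with hV2def
      have hVeq : V = V1 ∪ V2 := by
        ext α
        constructor
        · intro hα
          have hαU := subset_of_ssubset hVsub hα
          rw [hUeq] at hαU
          rcases hαU with hh | hh
          exacts [Or.inl ⟨hα, hh⟩, Or.inr ⟨hα, hh⟩]
        · rintro (⟨hh, -⟩ | ⟨hh, -⟩) <;> exact hh
      have hV1H : V1 ⊆ H1 := fun β hβ => hβ.2.2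
      have hV2H : V2 ⊆ H2 := fun β hβ => hβ.2.2
      by_cases hc1 : U1 ⊆ V1
      · have hV1U : V1 = U1 := Set.Subset.antisymm (fun β hβ => hβ.2) hc1
        have hV2ss : V2 ⊂ U2 := by
          rw [Set.ssubset_def]
          refine ⟨fun β hβ => hβ.2, fun hsup => ?_⟩
          have hUV : U ⊆ V := by
            rw [hUeq, hVeq, hV1U]
            exact Set.union_subset_union_right U1 hsup
          exact (Set.ssubset_def ▸ hVsub).2 hUV
        refine hg2 ⟨V2, hV2ss, ?_⟩
        rintro α ⟨hαT, hαU2⟩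
        by_cases hmem : α ∈ V2
        · exact hmem
        obtain ⟨hor, -⟩ := mem_uplus.mp hαT
        rcases hor with hV | ⟨hS, hdual⟩
        · exact hV
        obtain ⟨r, hr, rfl, hsat⟩ := hS
        rw [← comp12 U1 V2 hU1H hV2H, ← hV1U, ← hVeq] at hsat
        have hT : r.head ∈ T DB (η₁ ∪ η₂) V := by
          refine mem_uplus.mpr ⟨Or.inr ⟨⟨r, Or.inr hr, rfl, hsat⟩, ?_⟩, ?_⟩
          · rw [hVeq]
            rintro (hd | hd)
            · exact factHead r.head hαU2.2 r.head.dual (hV1H hd) (atomA_dual r.head).symm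
            · exact hdual hd
          · rintro ⟨hin, -⟩
            rw [hVeq] at hin
            rcases hin with hin | hin
            · exact hH12 r.head (hV1H hin) hαU2.2
            · exact hmem hin
        exact ⟨hVT ⟨hT, hαU2.1⟩, hαU2⟩
      · have hV1ss : V1 ⊂ U1 := by
          rw [Set.ssubset_def]
          exact ⟨fun β hβ => hβ.2, hc1⟩
        refine hg1 ⟨V1, hV1ss, ?_⟩
        rintro α ⟨hαT, hαU1⟩
        by_cases hmem : α ∈ V1
        · exact hmem
        obtain ⟨hor, -⟩ := mem_uplus.mp hαT
        rcases hor with hV | ⟨hS, hdual⟩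
        · exact hV
        obtain ⟨r, hr, rfl, hsat⟩ := hS
        have hsat2 : satBody (applyUA V DB) r.body := by
          rw [hVeq]
          exact (congr1 V1 V2 hV2H r hr).mpr hsat
        have hT : r.head ∈ T DB (η₁ ∪ η₂) V := by
          refine mem_uplus.mpr ⟨Or.inr ⟨⟨r, Or.inl hr, rfl, hsat2⟩, ?_⟩, ?_⟩
          · rw [hVeq]
            rintro (hd | hd)
            · exact hdual hd
            · exact factHead r.head.dual (hV2H hd) r.head hαU1.2 (atomA_dual r.head)
          · rintro ⟨hin, -⟩
            rw [hVeq] at hin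
            rcases hin with hin | hin
            · exact hmem hin
            · exact hH12 r.head hαU1.2 (hV2H hin)
        exact ⟨hVT ⟨hT, hαU1.1⟩, hαU1⟩
    exact repair_of_grounded hwU hgU
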